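/- arXiv:1911.11255 — 6 statements merged into one kernel-verified Lean document; each statement's English description precedes it below -/
import Mathlib

section
/- If a dataset D is ℓ-augmented linearly separable with radius R, then for the online structured perceptron algorithm run on D, the cumulative loss of its predictions satisfies Σ_{i=1}^{t} ℓ(y_i, ŷ_i) ≤ R² for every t ≤ n. -/
open scoped RealInnerProductSpace

/-!
Novikoff's argument with the loss as the unit of progress. Every update direction
`d = Φ(x, y) - Φ(x, ŷ)` satisfies `ℓ(y, ŷ) ≤ ⟪w̄, d⟫` and `‖d‖² ≤ ℓ(y, ŷ) R²`, while the argmax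
rule makes `⟪w, d⟫ ≤ 0`. Hence after `t` rounds the cumulative loss `L` satisfies
`L ≤ ⟪w̄, w_t⟫ ≤ ‖w_t‖` and `‖w_t‖² ≤ R² L`, so `L² ≤ R² L`, i.e. `L ≤ R²`.
-/

section Perceptron

variable {E : Type*} [NormedAddCommGroup E] [InnerProductSpace ℝ E]

theorem norm_add_sq_le_of_inner_nonpos {v d : E} (h : ⟪v, d⟫ ≤ 0) :
    ‖v + d‖ ^ 2 ≤ ‖v‖ ^ 2 + ‖d‖ ^ 2 := by
  rw [norm_add_sq_real]
  linarith

theorem norm_sq_le_add_sum_of_inner_sub_nonpos {w : ℕ → E} {t : ℕ}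
    (h : ∀ i < t, ⟪w i, w (i + 1) - w i⟫ ≤ 0) :
    ‖w t‖ ^ 2 ≤ ‖w 0‖ ^ 2 + ∑ i ∈ Finset.range t, ‖w (i + 1) - w i‖ ^ 2 := by
  induction t with
  | zero => simp
  | succ k ih =>
    have hstep := norm_add_sq_le_of_inner_nonpos (h k k.lt_succ_self)
    rw [add_sub_cancel] at hstep
    rw [Finset.sum_range_succ]
    linarith [ih fun i hi => h i (hi.trans k.lt_succ_self)]

theorem sum_le_inner_sub_of_le_inner_sub {w : ℕ → E} {c : ℕ → ℝ} {wbar : E} {t : ℕ}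
    (h : ∀ i < t, c i ≤ ⟪wbar, w (i + 1) - w i⟫) :
    ∑ i ∈ Finset.range t, c i ≤ ⟪wbar, w t - w 0⟫ := by
  rw [← Finset.sum_range_sub, inner_sum]
  exact Finset.sum_le_sum fun i hi => h i (Finset.mem_range.mp hi)

theorem le_sq_of_le_inner_of_norm_sq_le {L R : ℝ} {wbar v : E} (hwbar : ‖wbar‖ = 1)
    (hinner : L ≤ ⟪wbar, v⟫) (hnorm : ‖v‖ ^ 2 ≤ R ^ 2 * L) : L ≤ R ^ 2 := by
  rcases le_or_gt L 0 with hL | hL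
  · exact hL.trans (sq_nonneg R)
  · have hLv : L ≤ ‖v‖ := by
      simpa [hwbar] using hinner.trans (real_inner_le_norm wbar v)
    nlinarith

theorem sum_le_sq_of_perceptron_steps {w : ℕ → E} {c : ℕ → ℝ} {wbar : E} {R : ℝ} {t : ℕ}
    (hwbar : ‖wbar‖ = 1) (hw0 : w 0 = 0)
    (hcorr : ∀ i < t, ⟪w i, w (i + 1) - w i⟫ ≤ 0)
    (hlen : ∀ i < t, ‖w (i + 1) - w i‖ ^ 2 ≤ c i * R ^ 2)
    (hprog : ∀ i < t, c i ≤ ⟪wbar, w (i + 1) - w i⟫) :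
    ∑ i ∈ Finset.range t, c i ≤ R ^ 2 := by
  have hinner := sum_le_inner_sub_of_le_inner_sub hprog
  rw [hw0, sub_zero] at hinner
  have hnorm : ‖w t‖ ^ 2 ≤ R ^ 2 * ∑ i ∈ Finset.range t, c i := by
    calc ‖w t‖ ^ 2 ≤ ‖w 0‖ ^ 2 + ∑ i ∈ Finset.range t, ‖w (i + 1) - w i‖ ^ 2 :=
          norm_sq_le_add_sum_of_inner_sub_nonpos hcorr
      _ ≤ 0 + ∑ i ∈ Finset.range t, c i * R ^ 2 := by
          rw [hw0, norm_zero, zero_pow two_ne_zero]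
          gcongr with i hi
          exact hlen i (Finset.mem_range.mp hi)
      _ = R ^ 2 * ∑ i ∈ Finset.range t, c i := by rw [zero_add, ← Finset.sum_mul, mul_comm]
  exact le_sq_of_le_inner_of_norm_sq_le hwbar hinner hnorm

end Perceptron

theorem structured_perceptron_loss_bound_general
    {E X Y : Type*} [NormedAddCommGroup E] [InnerProductSpace ℝ E]
    (n : ℕ) (x : ℕ → X) (y : ℕ → Y) (Φ : X → Y → E) (ℓ : Y → Y → ℝ)
    (R : ℝ) (wbar : E) (hwbar : ‖wbar‖ = 1)
    (hℓdiag : ∀ a : Y, ℓ a a = 0)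
    (hsepA : ∀ i < n, ∀ y' : Y, y' ≠ y i →
      ‖Φ (x i) (y i) - Φ (x i) y'‖ ^ 2 ≤ ℓ (y i) y' * R ^ 2)
    (hsepB : ∀ i < n, ∀ y' : Y, y' ≠ y i →
      ℓ (y i) y' ≤ ⟪wbar, Φ (x i) (y i) - Φ (x i) y'⟫)
    -- the online structured perceptron run
    (w : ℕ → E) (yhat : ℕ → Y)
    (hw0 : w 0 = 0)
    (hargmax : ∀ i < n, ∀ y' : Y, ⟪w i, Φ (x i) y'⟫ ≤ ⟪w i, Φ (x i) (yhat i)⟫)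
    (hupd : ∀ i < n, w (i + 1) = w i + Φ (x i) (y i) - Φ (x i) (yhat i))
    (t : ℕ) (ht : t ≤ n) :
    ∑ i ∈ Finset.range t, ℓ (y i) (yhat i) ≤ R ^ 2 := by
  have hstep : ∀ i < n, w (i + 1) - w i = Φ (x i) (y i) - Φ (x i) (yhat i) := fun i hi => by
    rw [hupd i hi, add_sub_assoc, add_sub_cancel_left]
  refine sum_le_sq_of_perceptron_steps hwbar hw0 (fun i hi => ?_) (fun i hi => ?_)
    (fun i hi => ?_) <;> rw [hstep i (hi.trans_le ht)]
  · rw [inner_sub_right, sub_nonpos]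
    exact hargmax i (hi.trans_le ht) (y i)
  · by_cases h : yhat i = y i
    · simp [h, hℓdiag]
    · exact hsepA i (hi.trans_le ht) _ h
  · by_cases h : yhat i = y i
    · simp [h, hℓdiag]
    · exact hsepB i (hi.trans_le ht) _ h

/-- **Structured Perceptron mistake bound (Theorem 1).**
If the dataset `(x i, y i)` (for `i < n`) is `ℓ`-augmented linearly separable by the
unit vector `wbar` with radius `R`, then the cumulative loss of the online structured
perceptron predictions satisfies `∑_{i<t} ℓ (y i) (yhat i) ≤ R²` for all `t ≤ n`. -/
theorem structured_perceptron_loss_bound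
    {E X Y : Type*} [NormedAddCommGroup E] [InnerProductSpace ℝ E] [Fintype Y]
    (n : ℕ) (x : ℕ → X) (y : ℕ → Y) (Φ : X → Y → E) (ℓ : Y → Y → ℝ)
    (R : ℝ) (hR : 0 < R) (wbar : E) (hwbar : ‖wbar‖ = 1)
    (hℓnonneg : ∀ a b : Y, 0 ≤ ℓ a b) (hℓdiag : ∀ a : Y, ℓ a a = 0)
    (hsepA : ∀ i < n, ∀ y' : Y, y' ≠ y i →
      ‖Φ (x i) (y i) - Φ (x i) y'‖ ^ 2 ≤ ℓ (y i) y' * R ^ 2)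
    (hsepB : ∀ i < n, ∀ y' : Y, y' ≠ y i →
      ℓ (y i) y' ≤ ⟪wbar, Φ (x i) (y i) - Φ (x i) y'⟫)
    -- the online structured perceptron run
    (w : ℕ → E) (yhat : ℕ → Y)
    (hw0 : w 0 = 0)
    (hargmax : ∀ i < n, ∀ y' : Y, ⟪w i, Φ (x i) y'⟫ ≤ ⟪w i, Φ (x i) (yhat i)⟫)
    (hupd : ∀ i < n, w (i + 1) = w i + Φ (x i) (y i) - Φ (x i) (yhat i))
    (t : ℕ) (ht : t ≤ n) :
    ∑ i ∈ Finset.range t, ℓ (y i) (yhat i) ≤ R ^ 2 :=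
  structured_perceptron_loss_bound_general n x y Φ ℓ R wbar hwbar hℓdiag hsepA hsepB w yhat hw0
    hargmax hupd t ht
end

section
/- If D is linearly separable with margin δ (i.e., some unit vector w̄ satisfies w̄·(Φ(x,y) − Φ(x,y')) ≥ δ for all examples and wrong outputs) and ‖Φ(x,y) − Φ(x,y')‖ ≤ R for all such pairs, then the online structured perceptron makes at most R²/δ² prediction mistakes: Σ_{i=1}^{t} 1[y_i ≠ ŷ_i] ≤ R²/δ². -/
open scoped RealInnerProductSpace

/-- **Novikoff-type mistake bound for the structured perceptron.**
If the dataset is linearly separable with margin `δ` by a unit vector `wbar`, and the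
feature differences are bounded by `R`, then the online structured perceptron makes
at most `R²/δ²` prediction mistakes. -/
theorem structured_perceptron_mistake_bound
    {E X Y : Type*} [NormedAddCommGroup E] [InnerProductSpace ℝ E] [Fintype Y]
    [DecidableEq Y]
    (n : ℕ) (x : ℕ → X) (y : ℕ → Y) (Φ : X → Y → E)
    (R δ : ℝ) (hR : 0 < R) (hδ : 0 < δ) (wbar : E) (hwbar : ‖wbar‖ = 1)
    (hradius : ∀ i < n, ∀ y' : Y, y' ≠ y i →
      ‖Φ (x i) (y i) - Φ (x i) y'‖ ≤ R)
    (hsep : ∀ i < n, ∀ y' : Y, y' ≠ y i →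
      δ ≤ ⟪wbar, Φ (x i) (y i) - Φ (x i) y'⟫)
    -- the online structured perceptron run
    (w : ℕ → E) (yhat : ℕ → Y)
    (hw0 : w 0 = 0)
    (hargmax : ∀ i < n, ∀ y' : Y, ⟪w i, Φ (x i) y'⟫ ≤ ⟪w i, Φ (x i) (yhat i)⟫)
    (hupd : ∀ i < n, w (i + 1) = w i + Φ (x i) (y i) - Φ (x i) (yhat i))
    (t : ℕ) (ht : t ≤ n) :
    ∑ i ∈ Finset.range t, (if y i ≠ yhat i then (1 : ℝ) else 0) ≤ R ^ 2 / δ ^ 2 := by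
  set M : ℕ → ℝ := fun s => ∑ i ∈ Finset.range s, (if y i ≠ yhat i then (1 : ℝ) else 0)
    with hMdef
  have hMnonneg : ∀ s, 0 ≤ M s := by
    intro s
    apply Finset.sum_nonneg
    intro i _
    split <;> norm_num
  have key : ∀ s ≤ n, δ * M s ≤ ⟪wbar, w s⟫ ∧ ‖w s‖ ^ 2 ≤ R ^ 2 * M s := by
    intro s hs
    induction s with
    | zero => simp [hw0, hMdef]
    | succ i ih =>
      have hin : i < n := hs
      obtain ⟨ih1, ih2⟩ := ih (Nat.le_of_lt hin)
      have hMsucc : M (i + 1) = M i + (if y i ≠ yhat i then (1 : ℝ) else 0) := by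
        simp [hMdef, Finset.sum_range_succ]
      have hwsucc := hupd i hin
      by_cases hcase : y i = yhat i
      · have hd : Φ (x i) (y i) - Φ (x i) (yhat i) = 0 := by rw [hcase]; simp
        have hw' : w (i + 1) = w i := by rw [hwsucc, add_sub_assoc, hd, add_zero]
        constructor
        · rw [hw', hMsucc]; simp [hcase]; exact ih1
        · rw [hw', hMsucc]; simp [hcase]; exact ih2
      · have hne : yhat i ≠ y i := fun h => hcase h.symm
        set d := Φ (x i) (y i) - Φ (x i) (yhat i) with hd
        have hw' : w (i + 1) = w i + d := by rw [hwsucc, add_sub_assoc, ← hd]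
        have hsep' := hsep i hin (yhat i) hne
        have hrad := hradius i hin (yhat i) hne
        have hip : ⟪w i, d⟫ ≤ 0 := by
          rw [hd, inner_sub_right]
          linarith [hargmax i hin (y i)]
        constructor
        · rw [hw', hMsucc, inner_add_right]
          simp only [hcase, if_pos, ne_eq, not_false_eq_true]
          nlinarith
        · rw [hw', hMsucc]
          have hexp : ‖w i + d‖ ^ 2 = ‖w i‖ ^ 2 + 2 * ⟪w i, d⟫ + ‖d‖ ^ 2 := by
            rw [@norm_add_sq_real]
          have hd2 : ‖d‖ ^ 2 ≤ R ^ 2 := by nlinarith [norm_nonneg d]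
          simp only [hcase, if_pos, ne_eq, not_false_eq_true]
          nlinarith
  obtain ⟨h1, h2⟩ := key t ht
  have hcs : ⟪wbar, w t⟫ ≤ ‖w t‖ := by
    calc ⟪wbar, w t⟫ ≤ ‖wbar‖ * ‖w t‖ := real_inner_le_norm _ _
    _ = ‖w t‖ := by rw [hwbar]; ring
  have hMt := hMnonneg t
  by_cases hM0 : M t = 0
  · rw [show (∑ i ∈ Finset.range t, (if y i ≠ yhat i then (1 : ℝ) else 0)) = M t from rfl, hM0]
    positivity
  · have hMpos : 0 < M t := lt_of_le_of_ne hMt (Ne.symm hM0)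
    have h3 : δ * M t ≤ ‖w t‖ := le_trans h1 hcs
    have h4 : (δ * M t) ^ 2 ≤ ‖w t‖ ^ 2 := by
      apply sq_le_sq' <;> nlinarith [norm_nonneg (w t)]
    have h5 : δ ^ 2 * M t ≤ R ^ 2 := by nlinarith
    rw [show (∑ i ∈ Finset.range t, (if y i ≠ yhat i then (1 : ℝ) else 0)) = M t from rfl]
    rw [le_div_iff₀ (by positivity)]
    linarith
end

section
/- In the Passive-Aggressive update, each telescoping term satisfies ‖w_i − w̄‖² − ‖w_{i+1} − w̄‖² ≥ τ_i·(w_i·Φ̂_i − w_i·Φ_i + ℓ_i), where Φ_i = Φ(x_i,y_i), Φ̂_i = Φ(x_i,ŷ_i), ℓ_i = ℓ(y_i,ŷ_i), provided w̄·(Φ_i − Φ̂_i) ≥ ℓ_i. -/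
/-!
With `u = Φ - Φ̂` and `m = ℓ - ⟪w, u⟫`, expanding the square gives
`‖w - w̄‖² - ‖w + τ u - w̄‖² = -2τ⟪w - w̄, u⟫ - τ²‖u‖²`. The step size makes `τ²‖u‖² = τ m`,
and the margin condition `ℓ ≤ ⟪w̄, u⟫` gives `-⟪w - w̄, u⟫ ≥ m`, so the difference is at least
`2τ m - τ m = τ m`.
-/

open scoped RealInnerProductSpace

/-- For `a = 0` this still holds, since then `τ = m / 0 = 0`. -/
theorem sq_mul_eq_mul_of_eq_div {K : Type*} [Field K] {τ m a : K} (h : τ = m / a) :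
    τ ^ 2 * a = τ * m := by
  rcases eq_or_ne a 0 with rfl | ha
  · simp [h]
  · rw [h]
    field_simp

section

variable {E : Type*} [NormedAddCommGroup E] [InnerProductSpace ℝ E]

theorem norm_sub_sq_sub_norm_add_smul_sub_sq (w v u : E) (τ : ℝ) :
    ‖w - v‖ ^ 2 - ‖w + τ • u - v‖ ^ 2 = -2 * τ * ⟪w - v, u⟫ - τ ^ 2 * ‖u‖ ^ 2 := by
  rw [add_sub_right_comm, norm_add_sq_real, real_inner_smul_right, norm_smul, mul_pow,
    Real.norm_eq_abs, sq_abs]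
  ring

theorem mul_le_norm_sub_sq_sub_norm_add_smul_sub_sq {w v u : E} {τ ℓ : ℝ} (hτ : 0 ≤ τ)
    (hsep : ℓ ≤ ⟪v, u⟫) (hstep : τ ^ 2 * ‖u‖ ^ 2 = τ * (ℓ - ⟪w, u⟫)) :
    τ * (ℓ - ⟪w, u⟫) ≤ ‖w - v‖ ^ 2 - ‖w + τ • u - v‖ ^ 2 := by
  rw [norm_sub_sq_sub_norm_add_smul_sub_sq, hstep, inner_sub_left]
  linarith [mul_le_mul_of_nonneg_left hsep hτ]

end

/-- **One-step telescoping inequality for the Passive-Aggressive update.**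
If `w' = w + τ • (Φᵢ − Φ̂ᵢ)` with
`τ = (⟪w,Φ̂ᵢ⟫ − ⟪w,Φᵢ⟫ + ℓᵢ)/‖Φᵢ − Φ̂ᵢ‖²`, `τ ≥ 0`, and the separator `wbar`
satisfies `⟪wbar, Φᵢ − Φ̂ᵢ⟫ ≥ ℓᵢ`, then
`‖w − wbar‖² − ‖w' − wbar‖² ≥ τ·(⟪w,Φ̂ᵢ⟫ − ⟪w,Φᵢ⟫ + ℓᵢ)`. -/
theorem passive_aggressive_telescoping_term_lower_bound
    {E : Type*} [NormedAddCommGroup E] [InnerProductSpace ℝ E]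
    (w wbar Phi PhiHat : E) (ℓi τ : ℝ)
    (hτdef : τ = (⟪w, PhiHat⟫ - ⟪w, Phi⟫ + ℓi) / ‖Phi - PhiHat‖ ^ 2)
    (hτnonneg : 0 ≤ τ)
    (hsep : ℓi ≤ ⟪wbar, Phi - PhiHat⟫)
    (w' : E) (hupd : w' = w + τ • (Phi - PhiHat)) :
    τ * (⟪w, PhiHat⟫ - ⟪w, Phi⟫ + ℓi) ≤ ‖w - wbar‖ ^ 2 - ‖w' - wbar‖ ^ 2 := by
  subst hupd
  have hmargin : ⟪w, PhiHat⟫ - ⟪w, Phi⟫ + ℓi = ℓi - ⟪w, Phi - PhiHat⟫ := by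
    rw [inner_sub_right]
    ring
  rw [hmargin] at hτdef ⊢
  exact mul_le_norm_sub_sq_sub_norm_add_smul_sub_sq hτnonneg hsep
    (sq_mul_eq_mul_of_eq_div hτdef)
end

section
/- The dataset D₀ = {((0,0,−1),1), ((0,1,−1),2), ((1,1,−1),2), ((1,0,−1),3)} is rank linearly separable (there exist w₂, w₃ ∈ ℝ³ and δ > 0 with sign(y−k)·w_k·x ≥ δ for k = 2,3 and all examples), but is not Prank linearly separable (there exist no u ∈ ℝ², thresholds b₂ ≤ b₃, and δ > 0 such that sign(y−k)·((u,b_k)·x) ≥ δ for k = 2,3 and all examples). -/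
/-- Dot product on `ℝ³` represented as iterated pairs. -/
def dot3 (a b : ℝ × ℝ × ℝ) : ℝ := a.1 * b.1 + a.2.1 * b.2.1 + a.2.2 * b.2.2

/-- The sign function: `sgn m = 1` for `m ≥ 0` and `−1` for `m < 0` (so `sgn 0 = 1`). -/
noncomputable def sgn (m : ℤ) : ℝ := if 0 ≤ m then 1 else -1

/-- The dataset `D₀`. -/
def D0 : List ((ℝ × ℝ × ℝ) × ℤ) :=
  [((0, 0, -1), 1), ((0, 1, -1), 2), ((1, 1, -1), 2), ((1, 0, -1), 3)]

/-- **`D₀` is rank linearly separable but not Prank linearly separable.**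
There exist `w₂, w₃ ∈ ℝ³` and `δ > 0` with `sign(y−k)·wₖ·x ≥ δ` for `k = 2,3` and all
examples; but there are no shared direction `u ∈ ℝ²`, ordered thresholds `b₂ ≤ b₃`, and
`δ > 0` with `sign(y−k)·((u,bₖ)·x) ≥ δ` for `k = 2,3` and all examples. -/
theorem D0_rank_separable_not_prank_separable :
    (∃ (w : ℤ → ℝ × ℝ × ℝ) (δ : ℝ), 0 < δ ∧
      ∀ p ∈ D0, ∀ k ∈ ({2, 3} : Set ℤ), δ ≤ sgn (p.2 - k) * dot3 (w k) p.1) ∧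
    ¬ (∃ (u : ℝ × ℝ) (b : ℤ → ℝ) (δ : ℝ), 0 < δ ∧ b 2 ≤ b 3 ∧
      ∀ p ∈ D0, ∀ k ∈ ({2, 3} : Set ℤ),
        δ ≤ sgn (p.2 - k) * dot3 (u.1, u.2, b k) p.1) := by
  constructor
  · refine ⟨fun k => if k = 2 then (2, 2, 1) else (2, -4, 1), 1, one_pos, ?_⟩
    intro p hp k hk
    simp only [D0, List.mem_cons, List.not_mem_nil, or_false] at hp
    simp only [Set.mem_insert_iff, Set.mem_singleton_iff] at hk
    rcases hk with rfl | rfl <;> rcases hp with rfl | rfl | rfl | rfl <;>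
      norm_num [sgn, dot3]
  · rintro ⟨⟨a, c⟩, b, δ, hδ, -, h⟩
    have h1 := h ((0, 0, -1), 1) (by simp [D0]) 2 (by simp)
    have h2 := h ((0, 1, -1), 2) (by simp [D0]) 2 (by simp)
    have h3 := h ((0, 1, -1), 2) (by simp [D0]) 3 (by simp)
    have h4 := h ((1, 1, -1), 2) (by simp [D0]) 3 (by simp)
    have h5 := h ((1, 0, -1), 3) (by simp [D0]) 3 (by simp)
    norm_num [sgn, dot3] at h1 h2 h3 h4 h5
    linarith
end

section
/- Let D = {(x_i, y_i)} be ranked items with ‖x_i‖ ≤ R, x_{i,d} = −1, and y_i ∈ {1,…,r}. If D is rank linearly separable by a unit-norm w = (w₁,…,w_r) with margin δ, then the online CuSum Rank algorithm satisfies Σ_{i=1}^{t} |y_i − ŷ_i| ≤ R²/δ² for every t. -/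
/-!
The perceptron argument for the ensemble `W = (W₁,…,W_r)`. On a round with true rank `y` and
prediction `p`, exactly the `|y - p|` weights with index in `(min y p, max y p]` move by
`sgn (y - p) • x`. Each such index `k` satisfies `sgn (y - k) = sgn (y - p)`, so by separability
the potential `Φ = ∑ ⟪w̄ₖ, Wₖ⟫` grows by at least `δ |y - p|`. The squared norm `N = ∑ ‖Wₖ‖²`
grows by `|y - p| ‖x‖²` plus twice a cross term, which is `sgn (y - p)` times the score of `y`
minus the score of `p` and hence nonpositive because `p` is an argmax. Thus `δ M ≤ Φ`,
`N ≤ R² M` for the cumulative loss `M`, and Cauchy–Schwarz with `∑ ‖w̄ₖ‖² = 1` gives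
`δ² M² ≤ Φ² ≤ N ≤ R² M`.
-/

open scoped RealInnerProductSpace

open Finset

theorem sgn_sq (m : ℤ) : sgn m ^ 2 = 1 := by
  unfold sgn
  split_ifs <;> norm_num

theorem sgn_sub_eq_of_mem_Ioc {y p k : ℕ} (hk : k ∈ Ioc (min y p) (max y p)) :
    sgn ((y : ℤ) - k) = sgn ((y : ℤ) - p) := by
  rw [mem_Ioc] at hk
  have hsign : 0 ≤ (y : ℤ) - k ↔ 0 ≤ (y : ℤ) - p := by omega
  simp only [sgn, hsign]

theorem cast_card_Ioc_min_max (a b : ℕ) :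
    (#(Ioc (min a b) (max a b)) : ℝ) = (|(a : ℤ) - (b : ℤ)| : ℝ) := by
  rw [Nat.card_Ioc, Nat.cast_sub min_le_max, Nat.cast_max, Nat.cast_min, max_sub_min_eq_abs',
    Int.cast_natCast, Int.cast_natCast]

theorem Ioc_min_max_subset_Icc {y p r : ℕ} (hy : y ∈ Icc 1 r) (hp : p ∈ Icc 1 r) :
    Ioc (min y p) (max y p) ⊆ Icc 2 r := by
  intro k hk
  simp only [mem_Icc, mem_Ioc] at *
  omega

theorem sum_Icc_one_sub_sum_Icc_one {M : Type*} [AddCommGroup M] (g : ℕ → M) {a b : ℕ}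
    (hab : a ≤ b) : ∑ j ∈ Icc 1 b, g j - ∑ j ∈ Icc 1 a, g j = ∑ j ∈ Ioc a b, g j := by
  have hIcc (m : ℕ) : Icc 1 m = Ioc 0 m := Icc_add_one_left_eq_Ioc 0 m
  rw [hIcc, hIcc, ← sum_Ioc_consecutive g (Nat.zero_le a) hab, add_sub_cancel_left]

theorem sgn_mul_sum_Ioc_min_max_nonpos (g : ℕ → ℝ) {y p : ℕ}
    (h : ∑ j ∈ Icc 1 y, g j ≤ ∑ j ∈ Icc 1 p, g j) :
    sgn ((y : ℤ) - p) * ∑ j ∈ Ioc (min y p) (max y p), g j ≤ 0 := by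
  rcases lt_trichotomy y p with hyp | rfl | hpy
  · rw [min_eq_left hyp.le, max_eq_right hyp.le, ← sum_Icc_one_sub_sum_Icc_one g hyp.le]
    rw [show sgn ((y : ℤ) - p) = -1 from if_neg (by omega)]
    linarith
  · simp
  · rw [min_eq_right hpy.le, max_eq_left hpy.le, ← sum_Icc_one_sub_sum_Icc_one g hpy.le]
    rw [show sgn ((y : ℤ) - p) = 1 from if_pos (by omega)]
    linarith

theorem le_of_sub_le_sub_of_le {α : Type*} [AddCommGroup α] [PartialOrder α]
    [IsOrderedAddMonoid α] {f g : ℕ → α} {t : ℕ} (h0 : f 0 ≤ g 0)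
    (h : ∀ i < t, f (i + 1) - f i ≤ g (i + 1) - g i) : f t ≤ g t := by
  induction t with
  | zero => exact h0
  | succ t ih =>
    calc f (t + 1) = (f (t + 1) - f t) + f t := (sub_add_cancel _ _).symm
      _ ≤ (g (t + 1) - g t) + g t :=
        add_le_add (h t t.lt_add_one) (ih fun i hi => h i (by omega))
      _ = g (t + 1) := sub_add_cancel _ _

section Ensemble

variable {E : Type*} [NormedAddCommGroup E] [InnerProductSpace ℝ E]

theorem sq_sum_inner_le_mul {ι : Type*} (s : Finset ι) (u v : ι → E) :
    (∑ k ∈ s, ⟪u k, v k⟫) ^ 2 ≤ (∑ k ∈ s, ‖u k‖ ^ 2) * ∑ k ∈ s, ‖v k‖ ^ 2 := by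
  have habs : |∑ k ∈ s, ⟪u k, v k⟫| ≤ ∑ k ∈ s, ‖u k‖ * ‖v k‖ :=
    (abs_sum_le_sum_abs _ _).trans (sum_le_sum fun k _ => abs_real_inner_le_norm _ _)
  calc (∑ k ∈ s, ⟪u k, v k⟫) ^ 2 ≤ (∑ k ∈ s, ‖u k‖ * ‖v k‖) ^ 2 :=
        sq_le_sq' (neg_le_of_abs_le habs) (le_of_abs_le habs)
    _ ≤ _ := sum_mul_sq_le_sq_mul_sq _ _ _

noncomputable def cusumUpdate (w : ℕ → E) (x : E) (y p : ℕ) : ℕ → E := fun k =>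
  if min y p < k ∧ k ≤ max y p then w k + sgn ((y : ℤ) - p) • x else w k

theorem sum_cusumUpdate (f : ℕ → E → ℝ) (w : ℕ → E) (x : E) {y p : ℕ} {s : Finset ℕ}
    (hsub : Ioc (min y p) (max y p) ⊆ s) :
    ∑ k ∈ s, f k (cusumUpdate w x y p k) = ∑ k ∈ s, f k (w k) +
      ∑ k ∈ Ioc (min y p) (max y p), (f k (w k + sgn ((y : ℤ) - p) • x) - f k (w k)) := by
  rw [← sum_sdiff hsub, ← sum_sdiff hsub (f := fun k => f k (w k)), sum_sub_distrib]
  have hout : ∀ k ∈ s \ Ioc (min y p) (max y p), cusumUpdate w x y p k = w k :=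
    fun k hk => if_neg fun hk' => (mem_sdiff.1 hk).2 (mem_Ioc.2 hk')
  have hin : ∀ k ∈ Ioc (min y p) (max y p), cusumUpdate w x y p k = w k + sgn ((y : ℤ) - p) • x :=
    fun k hk => if_pos (mem_Ioc.1 hk)
  rw [sum_congr rfl fun k hk => congrArg (f k) (hout k hk),
    sum_congr rfl fun k hk => congrArg (f k) (hin k hk)]
  abel

theorem sum_inner_cusumUpdate_ge (wbar w : ℕ → E) (x : E) {y p : ℕ} {s : Finset ℕ} {δ : ℝ}
    (hsub : Ioc (min y p) (max y p) ⊆ s)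
    (hsep : ∀ k ∈ Ioc (min y p) (max y p), δ ≤ sgn ((y : ℤ) - k) * ⟪wbar k, x⟫) :
    ∑ k ∈ s, ⟪wbar k, w k⟫ + δ * (|(y : ℤ) - (p : ℤ)| : ℝ) ≤
      ∑ k ∈ s, ⟪wbar k, cusumUpdate w x y p k⟫ := by
  rw [sum_cusumUpdate (fun k v => ⟪wbar k, v⟫) w x hsub, ← cast_card_Ioc_min_max, mul_comm,
    ← nsmul_eq_mul]
  simp only [inner_add_right, real_inner_smul_right, add_sub_cancel_left]
  gcongr
  refine card_nsmul_le_sum _ _ _ fun k hk => ?_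
  rw [← sgn_sub_eq_of_mem_Ioc hk]
  exact hsep k hk

theorem sum_norm_sq_cusumUpdate_le (w : ℕ → E) (x : E) {y p : ℕ} {s : Finset ℕ} {R : ℝ}
    (hsub : Ioc (min y p) (max y p) ⊆ s) (hx : ‖x‖ ≤ R)
    (hargmax : ∑ j ∈ Icc 1 y, ⟪w j, x⟫ ≤ ∑ j ∈ Icc 1 p, ⟪w j, x⟫) :
    ∑ k ∈ s, ‖cusumUpdate w x y p k‖ ^ 2 ≤
      ∑ k ∈ s, ‖w k‖ ^ 2 + R ^ 2 * (|(y : ℤ) - (p : ℤ)| : ℝ) := by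
  have hstep : ∀ k, ‖w k + sgn ((y : ℤ) - p) • x‖ ^ 2 - ‖w k‖ ^ 2
      = 2 * (sgn ((y : ℤ) - p) * ⟪w k, x⟫) + ‖x‖ ^ 2 := fun k => by
    rw [norm_add_sq_real, real_inner_smul_right, norm_smul, Real.norm_eq_abs, mul_pow, sq_abs,
      sgn_sq]
    ring
  have hcross := sgn_mul_sum_Ioc_min_max_nonpos (fun j => ⟪w j, x⟫) hargmax
  have hx2 : ‖x‖ ^ 2 ≤ R ^ 2 := pow_le_pow_left₀ (norm_nonneg x) hx 2
  rw [sum_cusumUpdate (fun _ v => ‖v‖ ^ 2) w x hsub, ← cast_card_Ioc_min_max]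
  simp only [hstep, sum_add_distrib, ← mul_sum, sum_const, nsmul_eq_mul]
  nlinarith [(Nat.cast_nonneg _ : (0 : ℝ) ≤ #(Ioc (min y p) (max y p)))]

end Ensemble

theorem le_div_sq_of_potential_bounds {δ R M Φ N : ℝ} (hδ : 0 < δ) (hΦ : δ * M ≤ Φ)
    (hN : N ≤ R ^ 2 * M) (hCS : Φ ^ 2 ≤ N) : M ≤ R ^ 2 / δ ^ 2 := by
  rcases le_or_gt M 0 with hM | hM
  · exact hM.trans (by positivity)
  · rw [le_div_iff₀ (by positivity)]
    have : (δ * M) ^ 2 ≤ R ^ 2 * M :=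
      (pow_le_pow_left₀ (by positivity) hΦ 2).trans (hCS.trans hN)
    nlinarith

theorem cusum_rank_mistake_bound_general
    (d r n : ℕ) (x : ℕ → EuclideanSpace ℝ (Fin (d + 1))) (y : ℕ → ℕ)
    (R δ : ℝ) (hδ : 0 < δ)
    (hxnorm : ∀ i < n, ‖x i‖ ≤ R)
    (hrank : ∀ i < n, y i ∈ Finset.Icc 1 r)
    -- rank linear separability with margin δ by a unit-norm ensemble
    (wbar : ℕ → EuclideanSpace ℝ (Fin (d + 1)))
    (hunit : ∑ k ∈ Finset.Icc 1 r, ‖wbar k‖ ^ 2 = 1)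
    (hsep : ∀ i < n, ∀ k : ℕ, 2 ≤ k → k ≤ r →
      δ ≤ sgn ((y i : ℤ) - (k : ℤ)) * ⟪wbar k, x i⟫)
    -- the online CuSum Rank run
    (W : ℕ → ℕ → EuclideanSpace ℝ (Fin (d + 1))) (yhat : ℕ → ℕ)
    (hW0 : ∀ k, W 0 k = 0)
    (hyhatmem : ∀ i < n, yhat i ∈ Finset.Icc 1 r)
    (hargmax : ∀ i < n, ∀ k ∈ Finset.Icc 1 r,
      ∑ j ∈ Finset.Icc 1 k, ⟪W i j, x i⟫ ≤ ∑ j ∈ Finset.Icc 1 (yhat i), ⟪W i j, x i⟫)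
    (hupd : ∀ i < n, ∀ k : ℕ, W (i + 1) k =
      if min (y i) (yhat i) < k ∧ k ≤ max (y i) (yhat i) then
        W i k + sgn ((y i : ℤ) - (yhat i : ℤ)) • x i
      else W i k)
    (t : ℕ) (ht : t ≤ n) :
    ∑ i ∈ Finset.range t, (|(y i : ℤ) - (yhat i : ℤ)| : ℝ) ≤ R ^ 2 / δ ^ 2 := by
  set M : ℕ → ℝ := fun t => ∑ i ∈ range t, (|(y i : ℤ) - (yhat i : ℤ)| : ℝ)
  have hM (i : ℕ) : M (i + 1) - M i = (|(y i : ℤ) - (yhat i : ℤ)| : ℝ) := by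
    simp only [M, sum_range_succ, add_sub_cancel_left]
  have hstep : ∀ i < n, W (i + 1) = cusumUpdate (W i) (x i) (y i) (yhat i) :=
    fun i hi => funext (hupd i hi)
  have hIoc (i : ℕ) (hi : i < n) := Ioc_min_max_subset_Icc (hrank i hi) (hyhatmem i hi)
  have hsub (i : ℕ) (hi : i < n) := (hIoc i hi).trans (Icc_subset_Icc_left one_le_two)
  have hΦ : δ * M t ≤ ∑ k ∈ Icc 1 r, ⟪wbar k, W t k⟫ := by
    refine le_of_sub_le_sub_of_le (f := fun t : ℕ => δ * M t)
      (g := fun t : ℕ => ∑ k ∈ Icc 1 r, ⟪wbar k, W t k⟫) (by simp [M, hW0]) fun i hi => ?_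
    have hi : i < n := hi.trans_le ht
    rw [← mul_sub, hM, hstep i hi, le_sub_iff_add_le']
    refine sum_inner_cusumUpdate_ge _ _ _ (hsub i hi) fun k hk => ?_
    obtain ⟨h2k, hkr⟩ := mem_Icc.1 (hIoc i hi hk)
    exact hsep i hi k h2k hkr
  have hN : ∑ k ∈ Icc 1 r, ‖W t k‖ ^ 2 ≤ R ^ 2 * M t := by
    refine le_of_sub_le_sub_of_le (f := fun t : ℕ => ∑ k ∈ Icc 1 r, ‖W t k‖ ^ 2)
      (g := fun t : ℕ => R ^ 2 * M t) (by simp [M, hW0]) fun i hi => ?_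
    have hi : i < n := hi.trans_le ht
    rw [← mul_sub, hM, hstep i hi, sub_le_iff_le_add']
    exact sum_norm_sq_cusumUpdate_le _ _ (hsub i hi) (hxnorm i hi)
      (hargmax i hi (y i) (hrank i hi))
  have hCS := sq_sum_inner_le_mul (Icc 1 r) wbar (W t)
  rw [hunit, one_mul] at hCS
  exact le_div_sq_of_potential_bounds hδ hΦ hN hCS

/-- **Mistake bound for the online CuSum Rank algorithm.**
Ranked items `(x i, y i)` with `‖x i‖ ≤ R`, last coordinate `−1`, ranks in `{1,…,r}`.
If the dataset is rank linearly separable by a unit-norm ensemble `(w̄₁,…,w̄_r)` with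
margin `δ`, then the online CuSum Rank run satisfies
`∑_{i<t} |y i − ŷ i| ≤ R²/δ²` for every `t ≤ n`. -/
theorem cusum_rank_mistake_bound
    (d r n : ℕ) (x : ℕ → EuclideanSpace ℝ (Fin (d + 1))) (y : ℕ → ℕ)
    (R δ : ℝ) (hR : 0 < R) (hδ : 0 < δ)
    (hxnorm : ∀ i < n, ‖x i‖ ≤ R)
    (hxlast : ∀ i < n, x i (Fin.last d) = -1)
    (hrank : ∀ i < n, y i ∈ Finset.Icc 1 r)
    -- rank linear separability with margin δ by a unit-norm ensemble
    (wbar : ℕ → EuclideanSpace ℝ (Fin (d + 1)))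
    (hunit : ∑ k ∈ Finset.Icc 1 r, ‖wbar k‖ ^ 2 = 1)
    (hsep : ∀ i < n, ∀ k : ℕ, 2 ≤ k → k ≤ r →
      δ ≤ sgn ((y i : ℤ) - (k : ℤ)) * ⟪wbar k, x i⟫)
    -- the online CuSum Rank run
    (W : ℕ → ℕ → EuclideanSpace ℝ (Fin (d + 1))) (yhat : ℕ → ℕ)
    (hW0 : ∀ k, W 0 k = 0)
    (hyhatmem : ∀ i < n, yhat i ∈ Finset.Icc 1 r)
    (hargmax : ∀ i < n, ∀ k ∈ Finset.Icc 1 r,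
      ∑ j ∈ Finset.Icc 1 k, ⟪W i j, x i⟫ ≤ ∑ j ∈ Finset.Icc 1 (yhat i), ⟪W i j, x i⟫)
    (hupd : ∀ i < n, ∀ k : ℕ, W (i + 1) k =
      if min (y i) (yhat i) < k ∧ k ≤ max (y i) (yhat i) then
        W i k + sgn ((y i : ℤ) - (yhat i : ℤ)) • x i
      else W i k)
    (t : ℕ) (ht : t ≤ n) :
    ∑ i ∈ Finset.range t, (|(y i : ℤ) - (yhat i : ℤ)| : ℝ) ≤ R ^ 2 / δ ^ 2 :=
  cusum_rank_mistake_bound_general d r n x y R δ hδ hxnorm hrank wbar hunit hsep W yhat hW0 hyhatmem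
    hargmax hupd t ht
end

section
/- For the Prank feature map, Φ(x,y) − Φ(x,ŷ) = ((y−ŷ)·z, 0_{min(y,ŷ)}, −sign(y−ŷ)·1_{|y−ŷ|}, 0_{r−max(y,ŷ)}), so the structured perceptron update w ← w + Φ(x,y) − Φ(x,ŷ) is equivalent to the Prank updates u ← u + (y−ŷ)·z and b_k ← b_k − sign(y−ŷ) for min(y,ŷ) < k ≤ max(y,ŷ). -/
open scoped RealInnerProductSpace

/-- The threshold block of the Prank feature map `Φ(x,y) = (y·z, −1_y, 0_{r−y})`:
its `k`-th coordinate is `−1` if `k ≤ y` and `0` otherwise. -/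
noncomputable def prankPhiB (y k : ℕ) : ℝ := if k ≤ y then -1 else 0

/-- **The structured perceptron update recovers the Prank update.**
The difference of Prank feature maps is
`Φ(x,y) − Φ(x,ŷ) = ((y−ŷ)·z, 0_{min(y,ŷ)}, −sign(y−ŷ)·1_{|y−ŷ|}, 0_{r−max(y,ŷ)})`,
so the update `w ← w + Φ(x,y) − Φ(x,ŷ)` is exactly `u ← u + (y−ŷ)·z` together with
`b_k ← b_k − sign(y−ŷ)` for `min(y,ŷ) < k ≤ max(y,ŷ)` (and `b_k` unchanged otherwise). -/
theorem prank_update_eq_structured_perceptron_update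
    {E : Type*} [NormedAddCommGroup E] [InnerProductSpace ℝ E]
    (z u : E) (b : ℕ → ℝ) (y yhat : ℕ) :
    ((y : ℝ) • z - (yhat : ℝ) • z = (((y : ℤ) - (yhat : ℤ) : ℤ) : ℝ) • z) ∧
    (∀ k : ℕ, prankPhiB y k - prankPhiB yhat k =
      if min y yhat < k ∧ k ≤ max y yhat then -sgn ((y : ℤ) - (yhat : ℤ)) else 0) ∧
    (u + ((y : ℝ) • z - (yhat : ℝ) • z) = u + (((y : ℤ) - (yhat : ℤ) : ℤ) : ℝ) • z) ∧
    (∀ k : ℕ, b k + (prankPhiB y k - prankPhiB yhat k) =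
      if min y yhat < k ∧ k ≤ max y yhat then b k - sgn ((y : ℤ) - (yhat : ℤ))
      else b k) := by
  have h1 : (y : ℝ) • z - (yhat : ℝ) • z = (((y : ℤ) - (yhat : ℤ) : ℤ) : ℝ) • z := by
    rw [← sub_smul]; push_cast; ring_nf
  have h2 : ∀ k : ℕ, prankPhiB y k - prankPhiB yhat k =
      if min y yhat < k ∧ k ≤ max y yhat then -sgn ((y : ℤ) - (yhat : ℤ)) else 0 := by
    intro k
    unfold prankPhiB sgn
    rcases le_or_gt y yhat with h | h
    · have : (0:ℤ) ≤ (y:ℤ) - yhat ↔ yhat ≤ y := by omega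
      split_ifs <;> simp_all <;> omega
    · have : ¬ ((0:ℤ) ≤ (y:ℤ) - yhat) → False := by omega
      split_ifs <;> simp_all <;> omega
  exact ⟨h1, h2, by rw [h1], fun k => by rw [h2 k]; split_ifs <;> ring⟩
end
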